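/- arXiv:1611.05818 — 5 statements merged into one kernel-verified Lean document; each statement's English description precedes it below -/
import Mathlib

section
/- If P is a separating-set homogeneous closed subset of 2^ω, then for every σ ∈ T_P and every n ≥ |σ|, the ratio λ([σ] ∩ [T_P↾n]) / λ([T_P↾n]) equals 2^{-θ_P(σ)}; in particular the limiting relative measure λ_P(σ) exists and equals 2^{-θ_P(σ)}. -/
open MeasureTheory Filter

noncomputable section

/-- The cylinder (basic clopen set) determined by a finite binary string. -/
def cyl (σ : List Bool) : Set (ℕ → Bool) :=
  {X | ∀ i, i < σ.length → X i = σ.getD i false}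

/-- σ is an extendible node of P, i.e. σ ∈ T_P. -/
def extn (P : Set (ℕ → Bool)) (σ : List Bool) : Prop :=
  (cyl σ ∩ P).Nonempty

/-- The level-n strings of the tree of extendible nodes, T_P ↾ n. -/
def level (P : Set (ℕ → Bool)) (n : ℕ) : Set (List Bool) :=
  {σ | σ.length = n ∧ extn P σ}

/-- #(T_P ↾ n). -/
def levelCard (P : Set (ℕ → Bool)) (n : ℕ) : ℕ :=
  (level P n).ncard

/-- The clopen set [T_P ↾ n] generated by the level-n extendible nodes. -/
def levelUnion (P : Set (ℕ → Bool)) (n : ℕ) : Set (ℕ → Bool) :=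
  ⋃ σ ∈ level P n, cyl σ

/-- The prefix of σ of length m+1 with its last bit flipped, i.e. (σ↾(m+1))^↷. -/
def flipAt (σ : List Bool) (m : ℕ) : List Bool :=
  σ.take m ++ [!σ.getD m false]

/-- θ_P(σ): the number of initial segments of σ whose last-bit-flipped sibling is in T_P. -/
def theta (P : Set (ℕ → Bool)) (σ : List Bool) : ℕ :=
  {m | m < σ.length ∧ extn P (flipAt σ m)}.ncard

/-- The number of extensions of σ in T_P ↾ n. -/
def extCard (P : Set (ℕ → Bool)) (σ : List Bool) (n : ℕ) : ℕ :=
  {τ | τ.length = n ∧ extn P τ ∧ σ <+: τ}.ncard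

/-- X ↾ n as a finite string. -/
def prefixList (X : ℕ → Bool) (n : ℕ) : List Bool :=
  List.ofFn (fun i : Fin n => X i)

/-- Interleaving X ⊕ Y of two infinite sequences. -/
def seqInterleave (X Y : ℕ → Bool) : ℕ → Bool :=
  fun n => if n % 2 = 0 then X (n / 2) else Y (n / 2)

/-- Interleaving σ ⊕ τ of two finite strings (of equal length). -/
def interleave : List Bool → List Bool → List Bool
  | a :: σ, b :: τ => a :: b :: interleave σ τ
  | _, _ => []

/-- The product P₀ ⊗ P₁ = {X ⊕ Y : X ∈ P₀, Y ∈ P₁}. -/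
def prodClass (P₀ P₁ : Set (ℕ → Bool)) : Set (ℕ → Bool) :=
  {Z | ∃ X ∈ P₀, ∃ Y ∈ P₁, Z = seqInterleave X Y}




lemma cyl_subset_of_prefix {σ τ : List Bool} (h : σ <+: τ) : cyl τ ⊆ cyl σ := by
  intro X hX i hi
  obtain ⟨ρ, rfl⟩ := h
  rw [hX i (lt_of_lt_of_le hi (by simp))]
  rw [List.getD_append _ _ _ _ hi]

lemma extn_mono {P : Set (ℕ → Bool)} {σ τ : List Bool} (h : σ <+: τ) (hτ : extn P τ) :
    extn P σ := by
  obtain ⟨X, hX1, hX2⟩ := hτ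
  exact ⟨X, cyl_subset_of_prefix h hX1, hX2⟩

lemma prefix_of_getD {σ τ : List Bool} (hlen : σ.length ≤ τ.length)
    (h : ∀ i, i < σ.length → σ.getD i false = τ.getD i false) : σ <+: τ := by
  have : σ = τ.take σ.length := by
    apply List.ext_getElem (by rw [List.length_take]; omega)
    intro i h1 h2
    have h3 : i < τ.length := lt_of_lt_of_le h1 hlen
    have := h i h1
    rw [List.getD_eq_getElem _ _ h1, List.getD_eq_getElem _ _ h3] at this
    simpa [List.getElem_take] using this
  rw [this]; exact List.take_prefix _ _

lemma prefixList_length (X : ℕ → Bool) (n : ℕ) : (prefixList X n).length = n := by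
  simp [prefixList]

lemma mem_cyl_prefixList (X : ℕ → Bool) (n : ℕ) : X ∈ cyl (prefixList X n) := by
  intro i hi
  rw [prefixList_length] at hi
  rw [List.getD_eq_getElem _ _ (by simp [prefixList, hi])]
  simp [prefixList]

lemma extn_prefixList {P : Set (ℕ → Bool)} {X : ℕ → Bool} (hX : X ∈ P) (n : ℕ) :
    extn P (prefixList X n) := ⟨X, mem_cyl_prefixList X n, hX⟩

lemma prefix_prefixList {σ : List Bool} {X : ℕ → Bool} (hX : X ∈ cyl σ) {n : ℕ}
    (hn : σ.length ≤ n) : σ <+: prefixList X n := by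
  apply prefix_of_getD (by rw [prefixList_length]; exact hn)
  intro i hi
  have h2 : i < (prefixList X n).length := by rw [prefixList_length]; exact lt_of_lt_of_le hi hn
  rw [← hX i hi, List.getD_eq_getElem _ _ h2]
  simp [prefixList]

lemma getD_snoc_length (l : List Bool) (b : Bool) : (l ++ [b]).getD l.length false = b := by
  simp [List.getD]

/- ### the finset of level-n extensions -/

lemma EFin (P : Set (ℕ → Bool)) (σ : List Bool) (n : ℕ) :
    {τ : List Bool | τ.length = n ∧ extn P τ ∧ σ <+: τ}.Finite :=
  (List.finite_length_eq Bool n).subset (fun _ h => h.1)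

def EF (P : Set (ℕ → Bool)) (σ : List Bool) (n : ℕ) : Finset (List Bool) :=
  (EFin P σ n).toFinset

lemma mem_EF {P : Set (ℕ → Bool)} {σ : List Bool} {n : ℕ} {τ : List Bool} :
    τ ∈ EF P σ n ↔ τ.length = n ∧ extn P τ ∧ σ <+: τ := by
  simp [EF, Set.Finite.mem_toFinset]

lemma extCard_eq (P : Set (ℕ → Bool)) (σ : List Bool) (n : ℕ) :
    extCard P σ n = (EF P σ n).card := by
  rw [extCard, ← Set.ncard_coe_finset]
  congr 1
  ext τ
  simp [mem_EF]

lemma levelUnion_eq (P : Set (ℕ → Bool)) (n : ℕ) :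
    levelUnion P n = ⋃ τ ∈ EF P [] n, cyl τ := by
  ext X
  simp [levelUnion, level, mem_EF]

/- ### measure computations -/

lemma measurable_cyl (σ : List Bool) : MeasurableSet (cyl σ) := by
  have : cyl σ = ⋂ i ∈ Finset.range σ.length, (fun X : ℕ → Bool => X i) ⁻¹' {σ.getD i false} := by
    ext X; simp [cyl]
  rw [this]
  exact MeasurableSet.biInter (Set.to_countable _)
    (fun i _ => (measurable_pi_apply i) (measurableSet_singleton _))

lemma cyl_disjoint {σ τ : List Bool} (hlen : σ.length = τ.length) (hne : σ ≠ τ) :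
    Disjoint (cyl σ) (cyl τ) := by
  rw [Set.disjoint_left]
  intro X hXσ hXτ
  apply hne
  apply List.ext_getElem hlen
  intro i h1 h2
  rw [← List.getD_eq_getElem σ false h1, ← List.getD_eq_getElem τ false h2,
    ← hXσ i h1, ← hXτ i h2]

lemma measure_biUnion_cyl (μ : Measure (ℕ → Bool))
    (hμ : ∀ σ : List Bool, μ (cyl σ) = (1/2 : ENNReal) ^ σ.length)
    (n : ℕ) (S : Finset (List Bool)) (hS : ∀ τ ∈ S, τ.length = n) :
    μ (⋃ τ ∈ S, cyl τ) = S.card * (1/2 : ENNReal) ^ n := by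
  rw [measure_biUnion_finset ?_ (fun τ _ => measurable_cyl τ)]
  · rw [Finset.sum_congr rfl (fun τ hτ => by rw [hμ τ, hS τ hτ])]
    simp [Finset.sum_const, nsmul_eq_mul]
  · intro a ha b hb hab
    exact cyl_disjoint (by rw [hS a ha, hS b hb]) hab

lemma inter_levelUnion {P : Set (ℕ → Bool)} {σ : List Bool} {n : ℕ} (h : σ.length ≤ n) :
    cyl σ ∩ levelUnion P n = ⋃ τ ∈ EF P σ n, cyl τ := by
  ext X
  simp only [levelUnion, Set.mem_inter_iff, Set.mem_iUnion, exists_prop, mem_EF,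
    level, Set.mem_setOf_eq]
  constructor
  · rintro ⟨hXσ, τ, ⟨hτlen, hτext⟩, hXτ⟩
    refine ⟨τ, ⟨hτlen, hτext, ?_⟩, hXτ⟩
    apply prefix_of_getD (by rw [hτlen]; exact h)
    intro i hi
    rw [← hXσ i hi, ← hXτ i (by rw [hτlen]; exact lt_of_lt_of_le hi h)]
  · rintro ⟨τ, ⟨hτlen, hτext, hpre⟩, hXτ⟩
    exact ⟨cyl_subset_of_prefix hpre hXτ, τ, ⟨hτlen, hτext⟩, hXτ⟩

/- ### branching -/

def brs (P : Set (ℕ → Bool)) (ρ : List Bool) : Finset Bool :=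
  @Finset.filter _ (fun i => extn P (ρ ++ [i])) (Classical.decPred _) Finset.univ

lemma mem_brs {P : Set (ℕ → Bool)} {ρ : List Bool} {i : Bool} :
    i ∈ brs P ρ ↔ extn P (ρ ++ [i]) := by
  simp [brs]

lemma EF_succ {P : Set (ℕ → Bool)}
    (hhom : ∀ σ τ : List Bool, extn P σ → extn P τ → σ.length = τ.length →
      ∀ i : Bool, (extn P (σ ++ [i]) ↔ extn P (τ ++ [i])))
    {σ : List Bool} {n : ℕ} (hσn : σ.length ≤ n)
    {ρ : List Bool} (hρlen : ρ.length = n) (hρe : extn P ρ) :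
    (EF P σ (n+1)).card = (brs P ρ).card * (EF P σ n).card := by
  have himg : EF P σ (n+1) = ((EF P σ n) ×ˢ (brs P ρ)).image (fun p => p.1 ++ [p.2]) := by
    ext τ'
    simp only [mem_EF, Finset.mem_image, Finset.mem_product, mem_brs, Prod.exists]
    constructor
    · rintro ⟨hlen, hext, hpre⟩
      have hne : τ' ≠ [] := by intro h; rw [h] at hlen; simp at hlen
      refine ⟨τ'.dropLast, τ'.getLast hne, ⟨⟨?_, ?_, ?_⟩, ?_⟩, ?_⟩
      · simp [List.length_dropLast, hlen]
      · exact extn_mono ⟨[τ'.getLast hne], by rw [List.dropLast_append_getLast hne]⟩ hext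
      · refine List.prefix_of_prefix_length_le hpre
          ⟨[τ'.getLast hne], by rw [List.dropLast_append_getLast hne]⟩ ?_
        simp [List.length_dropLast, hlen]
        omega
      · rw [← hhom τ'.dropLast ρ ?_ hρe (by simp [List.length_dropLast, hlen, hρlen]) _]
        · rw [List.dropLast_append_getLast hne]; exact hext
        · exact extn_mono ⟨[τ'.getLast hne], by rw [List.dropLast_append_getLast hne]⟩ hext
      · exact List.dropLast_append_getLast hne
    · rintro ⟨τ, i, ⟨⟨hτlen, hτext, hτpre⟩, hi⟩, rfl⟩
      refine ⟨by simp [hτlen], ?_, hτpre.trans (List.prefix_append τ [i])⟩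
      rw [hhom τ ρ hτext hρe (by rw [hτlen, hρlen]) i]
      exact hi
  rw [himg, Finset.card_image_of_injOn ?_, Finset.card_product, mul_comm]
  intro p hp q hq hpq
  simp only [Finset.mem_coe, Finset.mem_product] at hp hq
  have hl : p.1.length = q.1.length := by
    rw [(mem_EF.mp hp.1).1, (mem_EF.mp hq.1).1]
  have h2 := List.append_inj hpq hl
  exact Prod.ext h2.1 (by simpa using h2.2)

/- theta computations -/

lemma theta_eq (P : Set (ℕ → Bool)) (σ : List Bool) :
    theta P σ = (@Finset.filter _ (fun m => extn P (flipAt σ m)) (Classical.decPred _)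
      (Finset.range σ.length)).card := by
  rw [theta, ← Set.ncard_coe_finset]
  congr 1
  ext m
  simp [and_comm]

lemma flipAt_snoc {ρ : List Bool} {b : Bool} {m : ℕ} (hm : m < ρ.length) :
    flipAt (ρ ++ [b]) m = flipAt ρ m := by
  unfold flipAt
  rw [List.take_append_of_le_length (le_of_lt hm), List.getD_append _ _ _ _ hm]

lemma flipAt_snoc_self (ρ : List Bool) (b : Bool) :
    flipAt (ρ ++ [b]) ρ.length = ρ ++ [!b] := by
  unfold flipAt
  rw [List.take_append_of_le_length le_rfl, List.take_length, getD_snoc_length]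

open Classical in
lemma theta_snoc (P : Set (ℕ → Bool)) (ρ : List Bool) (b : Bool) :
    theta P (ρ ++ [b]) = theta P ρ + (if extn P (ρ ++ [!b]) then 1 else 0) := by
  classical
  rw [theta_eq, theta_eq]
  have hlen : (ρ ++ [b]).length = ρ.length + 1 := by simp
  rw [hlen, Finset.range_add_one, Finset.filter_insert]
  have hcongr : @Finset.filter _ (fun m => extn P (flipAt (ρ ++ [b]) m)) (Classical.decPred _)
      (Finset.range ρ.length) = @Finset.filter _ (fun m => extn P (flipAt ρ m))
      (Classical.decPred _) (Finset.range ρ.length) := by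
    apply Finset.filter_congr
    intro m hm
    rw [flipAt_snoc (Finset.mem_range.mp hm)]
  simp only [flipAt_snoc_self, hcongr]
  by_cases h : extn P (ρ ++ [!b])
  · simp only [if_pos h]
    rw [Finset.card_insert_of_notMem (by simp)]
  · simp only [if_neg h, add_zero]

open Classical in
lemma card_brs {P : Set (ℕ → Bool)} {ρ : List Bool} (b : Bool) (hb : extn P (ρ ++ [b])) :
    (brs P ρ).card = if extn P (ρ ++ [!b]) then 2 else 1 := by
  classical
  by_cases h : extn P (ρ ++ [!b])
  · rw [if_pos h]
    have : brs P ρ = Finset.univ := by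
      ext i
      simp only [mem_brs, Finset.mem_univ, iff_true]
      rcases Bool.eq_or_eq_not i b with rfl | rfl
      · exact hb
      · exact h
    rw [this]; rfl
  · rw [if_neg h]
    have : brs P ρ = {b} := by
      ext i
      simp only [mem_brs, Finset.mem_singleton]
      constructor
      · intro hi
        rcases Bool.eq_or_eq_not i b with rfl | rfl
        · rfl
        · exact absurd hi h
      · rintro rfl; exact hb
    rw [this, Finset.card_singleton]

lemma card_EF_nil {P : Set (ℕ → Bool)} (hPne : P.Nonempty)
    (hhom : ∀ σ τ : List Bool, extn P σ → extn P τ → σ.length = τ.length →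
      ∀ i : Bool, (extn P (σ ++ [i]) ↔ extn P (τ ++ [i])))
    (σ : List Bool) (hσ : extn P σ) :
    (EF P [] σ.length).card = 2 ^ theta P σ := by
  induction σ using List.reverseRecOn with
  | nil =>
    have : EF P ([] : List Bool) 0 = {[]} := by
      ext τ
      simp only [mem_EF, Finset.mem_singleton, List.length_eq_zero_iff]
      constructor
      · rintro ⟨rfl, _, _⟩; rfl
      · rintro rfl; exact ⟨rfl, hσ, List.nil_prefix⟩
    rw [List.length_nil, this, Finset.card_singleton]
    have : theta P [] = 0 := by
      rw [theta]
      convert Set.ncard_empty ℕ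
      ext m; simp
    rw [this, pow_zero]
  | append_singleton ρ b ih =>
    have hρ : extn P ρ := extn_mono (List.prefix_append ρ [b]) hσ
    have hlen : (ρ ++ [b]).length = ρ.length + 1 := by simp
    rw [hlen, EF_succ hhom (by simp) rfl hρ, ih hρ, theta_snoc, pow_add]
    rw [card_brs b hσ]
    by_cases h : extn P (ρ ++ [!b])
    · rw [if_pos h, if_pos h, pow_one]; ring
    · rw [if_neg h, if_neg h, pow_zero]; ring

lemma ennreal_div_self_mul {a k : ENNReal} (ha0 : a ≠ 0) (haT : a ≠ ⊤) (hk0 : k ≠ 0)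
    (hkT : k ≠ ⊤) : a / (k * a) = k⁻¹ := by
  rw [div_eq_mul_inv, ENNReal.mul_inv (Or.inl hk0) (Or.inl hkT), ← mul_assoc, mul_comm a k⁻¹,
    mul_assoc, ENNReal.mul_inv_cancel ha0 haT, mul_one]

lemma count_main {P : Set (ℕ → Bool)} (hPne : P.Nonempty)
    (hhom : ∀ σ τ : List Bool, extn P σ → extn P τ → σ.length = τ.length →
      ∀ i : Bool, (extn P (σ ++ [i]) ↔ extn P (τ ++ [i])))
    {σ : List Bool} (hσ : extn P σ) {n : ℕ} (hn : σ.length ≤ n) :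
    (EF P [] n).card = 2 ^ theta P σ * (EF P σ n).card := by
  induction n, hn using Nat.le_induction with
  | base =>
    have : EF P σ σ.length = {σ} := by
      ext τ
      simp only [mem_EF, Finset.mem_singleton]
      constructor
      · rintro ⟨hlen, _, hpre⟩
        exact (hpre.eq_of_length hlen.symm).symm
      · rintro rfl; exact ⟨rfl, hσ, List.prefix_rfl⟩
    rw [this, Finset.card_singleton, mul_one, card_EF_nil hPne hhom σ hσ]
  | succ n hn ih =>
    obtain ⟨X₀, hX₀⟩ := hPne
    rw [EF_succ hhom hn (prefixList_length X₀ n) (extn_prefixList hX₀ n),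
      EF_succ hhom (Nat.zero_le n) (prefixList_length X₀ n) (extn_prefixList hX₀ n), ih]
    ring

theorem stmt2 (P : Set (ℕ → Bool)) (hPne : P.Nonempty) (hPc : IsClosed P)
    (μ : Measure (ℕ → Bool))
    (hμ : ∀ σ : List Bool, μ (cyl σ) = (1/2 : ENNReal) ^ σ.length)
    (hhom : ∀ σ τ : List Bool, extn P σ → extn P τ → σ.length = τ.length →
      ∀ i : Bool, (extn P (σ ++ [i]) ↔ extn P (τ ++ [i])))
    (σ : List Bool) (hσ : extn P σ) :
    (∀ n : ℕ, σ.length ≤ n →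
      μ (cyl σ ∩ levelUnion P n) / μ (levelUnion P n) = (1/2 : ENNReal) ^ theta P σ) ∧
    Tendsto (fun n => μ (cyl σ ∩ levelUnion P n) / μ (levelUnion P n)) atTop
      (nhds ((1/2 : ENNReal) ^ theta P σ)) := by
  have key : ∀ n : ℕ, σ.length ≤ n →
      μ (cyl σ ∩ levelUnion P n) / μ (levelUnion P n) = (1/2 : ENNReal) ^ theta P σ := by
    intro n hn
    have h1 : μ (cyl σ ∩ levelUnion P n) = (EF P σ n).card * (1/2 : ENNReal) ^ n := by
      rw [inter_levelUnion hn, measure_biUnion_cyl μ hμ n _ (fun τ hτ => (mem_EF.mp hτ).1)]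
    have h2 : μ (levelUnion P n) = (EF P [] n).card * (1/2 : ENNReal) ^ n := by
      rw [levelUnion_eq, measure_biUnion_cyl μ hμ n _ (fun τ hτ => (mem_EF.mp hτ).1)]
    have hcard : (EF P σ n).card ≠ 0 := by
      obtain ⟨X, hX1, hX2⟩ := hσ
      refine Finset.card_ne_zero_of_mem (a := prefixList X n) ?_
      exact mem_EF.mpr ⟨prefixList_length X n, extn_prefixList hX2 n, prefix_prefixList hX1 hn⟩
    rw [h1, h2, count_main hPne hhom hσ hn]
    have ha0 : ((EF P σ n).card : ENNReal) * (1/2 : ENNReal) ^ n ≠ 0 := by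
      apply mul_ne_zero
      · exact_mod_cast hcard
      · exact pow_ne_zero n (by simp)
    have haT : ((EF P σ n).card : ENNReal) * (1/2 : ENNReal) ^ n ≠ ⊤ := by
      apply ENNReal.mul_ne_top (ENNReal.natCast_ne_top _)
      exact ENNReal.pow_ne_top (by simp)
    have hrw : ((2 ^ theta P σ * (EF P σ n).card : ℕ) : ENNReal) * (1/2 : ENNReal) ^ n
        = (2 : ENNReal) ^ theta P σ * (((EF P σ n).card : ENNReal) * (1/2 : ENNReal) ^ n) := by
      push_cast
      ring
    rw [hrw, ennreal_div_self_mul ha0 haT (pow_ne_zero _ (by simp))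
      (ENNReal.pow_ne_top ENNReal.ofNat_ne_top)]
    simp [one_div, ← ENNReal.inv_pow]
  refine ⟨key, ?_⟩
  apply Tendsto.congr' _ tendsto_const_nhds
  filter_upwards [eventually_ge_atTop σ.length] with n hn
  exact (key n hn).symm
end
end

section
/- Let P be a nonempty closed subset of 2^ω with tree T_P, let σ ∈ T_P, and let n ≥ |σ|. If every extension τ ⪰ σ with τ ∈ T_P↾n satisfies θ_P(τ) ≥ θ_P(σ) + ℓ, then σ has at least 2^ℓ extensions in T_P↾n. -/
open MeasureTheory Filter

noncomputable section

/-! Induction on `n - |σ|`. An extendible node has one or two extendible children. With two,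
each child's `θ_P` exceeds that of `σ` by one, so each child only needs to gain `ℓ - 1` more and
carries `2 ^ (ℓ - 1)` extensions; with one, `θ_P` does not change and the child inherits `ℓ`. -/

lemma exists_extn_append_singleton {P : Set (ℕ → Bool)} {σ : List Bool} (h : extn P σ) :
    ∃ b, extn P (σ ++ [b]) := by
  obtain ⟨X, hX, hXP⟩ := h
  refine ⟨X σ.length, X, fun i hi => ?_, hXP⟩
  rcases Nat.lt_or_ge i σ.length with hlt | hge
  · rw [hX i hlt, List.getD_append _ _ _ _ hlt]
  · obtain rfl : i = σ.length := by simp at hi; omega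
    simp

lemma flipAt_of_prefix {σ τ : List Bool} {m : ℕ} (hpre : σ <+: τ) (hm : m < σ.length) :
    flipAt τ m = flipAt σ m := by
  obtain ⟨t, rfl⟩ := hpre
  simp [flipAt, List.take_append_of_le_length hm.le, List.getElem?_append_left hm]

lemma flipAt_append_singleton_length (σ : List Bool) (b : Bool) :
    flipAt (σ ++ [b]) σ.length = σ ++ [!b] := by
  simp [flipAt]

lemma theta_le_of_prefix (P : Set (ℕ → Bool)) {σ τ : List Bool} (hpre : σ <+: τ) :
    theta P σ ≤ theta P τ := by
  refine Set.ncard_le_ncard (fun m ⟨hm, hext⟩ => ⟨hm.trans_le hpre.length_le, ?_⟩)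
    ((Set.finite_lt_nat τ.length).subset fun m hm => hm.1)
  rwa [flipAt_of_prefix hpre hm]

open Classical in
lemma theta_eq_card_filter (P : Set (ℕ → Bool)) (σ : List Bool) :
    theta P σ = ((Finset.range σ.length).filter fun m => extn P (flipAt σ m)).card := by
  rw [theta, ← Set.ncard_coe_finset]
  congr 1
  ext m
  simp

open Classical in
lemma theta_append_singleton (P : Set (ℕ → Bool)) (σ : List Bool) (b : Bool) :
    theta P (σ ++ [b]) = theta P σ + if extn P (σ ++ [!b]) then 1 else 0 := by
  have hlow : ((Finset.range σ.length).filter fun m => extn P (flipAt (σ ++ [b]) m)) =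
      (Finset.range σ.length).filter fun m => extn P (flipAt σ m) :=
    Finset.filter_congr fun m hm =>
      by rw [flipAt_of_prefix (List.prefix_append σ [b]) (Finset.mem_range.mp hm)]
  rw [theta_eq_card_filter, theta_eq_card_filter, List.length_append, List.length_singleton,
    Finset.range_add_one, Finset.filter_insert, flipAt_append_singleton_length, hlow]
  split_ifs
  · rw [Finset.card_insert_of_notMem (by simp)]
  · rfl

def ThetaGrowth (P : Set (ℕ → Bool)) (σ : List Bool) (n ℓ : ℕ) : Prop :=
  ∀ τ : List Bool, τ.length = n → extn P τ → σ <+: τ → theta P σ + ℓ ≤ theta P τ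

open Classical in
lemma ThetaGrowth.append_singleton {P : Set (ℕ → Bool)} {σ : List Bool} {n ℓ : ℕ}
    (h : ThetaGrowth P σ n ℓ) (b : Bool) :
    ThetaGrowth P (σ ++ [b]) n (ℓ - if extn P (σ ++ [!b]) then 1 else 0) := by
  intro τ hτ hext hpre
  have hgrow := h τ hτ hext ((List.prefix_append σ [b]).trans hpre)
  have hmono := theta_le_of_prefix P hpre
  rw [theta_append_singleton] at hmono ⊢
  omega

def extSet (P : Set (ℕ → Bool)) (σ : List Bool) (n : ℕ) : Set (List Bool) :=
  {τ | τ.length = n ∧ extn P τ ∧ σ <+: τ}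

lemma extCard_eq_ncard (P : Set (ℕ → Bool)) (σ : List Bool) (n : ℕ) :
    extCard P σ n = (extSet P σ n).ncard := rfl

lemma extSet_finite (P : Set (ℕ → Bool)) (σ : List Bool) (n : ℕ) : (extSet P σ n).Finite :=
  (List.finite_length_eq Bool n).subset fun _ hτ => hτ.1

lemma extCard_le_of_prefix (P : Set (ℕ → Bool)) {σ ρ : List Bool} (n : ℕ) (hpre : σ <+: ρ) :
    extCard P ρ n ≤ extCard P σ n :=
  Set.ncard_le_ncard (fun _ ⟨hτ, hext, hρτ⟩ => ⟨hτ, hext, hpre.trans hρτ⟩) (extSet_finite P σ n)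

lemma one_le_extCard_length {P : Set (ℕ → Bool)} {σ : List Bool} (h : extn P σ) :
    1 ≤ extCard P σ σ.length :=
  (Set.ncard_pos (extSet_finite P σ _)).mpr ⟨σ, rfl, h, List.prefix_refl σ⟩

lemma append_singleton_prefix_or {σ τ : List Bool} (hpre : σ <+: τ) (hlt : σ.length < τ.length)
    (b : Bool) : σ ++ [b] <+: τ ∨ σ ++ [!b] <+: τ := by
  obtain ⟨_ | ⟨c, t⟩, rfl⟩ := hpre
  · simp at hlt
  · cases b <;> cases c <;> simp

lemma not_append_singleton_prefix_and (σ τ : List Bool) (b : Bool) :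
    ¬ (σ ++ [b] <+: τ ∧ σ ++ [!b] <+: τ) := by
  rintro ⟨h, h'⟩
  simpa using List.prefix_of_prefix_length_le h h' (by simp)

lemma extCard_eq_add {P : Set (ℕ → Bool)} {σ : List Bool} {n : ℕ} (hlt : σ.length < n)
    (b : Bool) : extCard P σ n = extCard P (σ ++ [b]) n + extCard P (σ ++ [!b]) n := by
  have hunion : extSet P σ n = extSet P (σ ++ [b]) n ∪ extSet P (σ ++ [!b]) n := by
    ext τ
    constructor
    · rintro ⟨hτ, hext, hpre⟩
      exact (append_singleton_prefix_or hpre (hτ ▸ hlt) b).imp (⟨hτ, hext, ·⟩) (⟨hτ, hext, ·⟩)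
    · rintro (⟨hτ, hext, hpre⟩ | ⟨hτ, hext, hpre⟩) <;>
        exact ⟨hτ, hext, (List.prefix_append σ _).trans hpre⟩
  rw [extCard_eq_ncard, hunion, Set.ncard_union_eq _ (extSet_finite _ _ _) (extSet_finite _ _ _)]
  · rfl
  · exact Set.disjoint_left.mpr fun τ h h' => not_append_singleton_prefix_and σ τ b ⟨h.2.2, h'.2.2⟩

lemma two_pow_le_extCard_of_children {P : Set (ℕ → Bool)} {σ : List Bool} {n ℓ : ℕ}
    (hσ : extn P σ) (hlt : σ.length < n)
    (ih : ∀ b ℓ', extn P (σ ++ [b]) → ThetaGrowth P (σ ++ [b]) n ℓ' →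
      2 ^ ℓ' ≤ extCard P (σ ++ [b]) n)
    (h : ThetaGrowth P σ n ℓ) : 2 ^ ℓ ≤ extCard P σ n := by
  obtain ⟨b, hb⟩ := exists_extn_append_singleton hσ
  by_cases hsib : extn P (σ ++ [!b])
  · calc 2 ^ ℓ ≤ 2 ^ (ℓ - 1) + 2 ^ (ℓ - 1) := by
          rcases ℓ with _ | ℓ
          · simp
          · simp [pow_succ, mul_two]
      _ ≤ extCard P (σ ++ [b]) n + extCard P (σ ++ [!b]) n :=
          add_le_add (ih b _ hb (by simpa [hsib] using h.append_singleton b))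
            (ih (!b) _ hsib (by simpa [Bool.not_not, hb] using h.append_singleton (!b)))
      _ = extCard P σ n := (extCard_eq_add hlt b).symm
  · calc 2 ^ ℓ ≤ extCard P (σ ++ [b]) n := ih b ℓ hb (by simpa [hsib] using h.append_singleton b)
      _ ≤ extCard P σ n := extCard_le_of_prefix P n (List.prefix_append σ [b])

theorem stmt3_general (P : Set (ℕ → Bool))
    (σ : List Bool) (hσ : extn P σ) (n ℓ : ℕ) (hn : σ.length ≤ n)
    (h : ∀ τ : List Bool, τ.length = n → extn P τ → σ <+: τ →
      theta P σ + ℓ ≤ theta P τ) :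
    2 ^ ℓ ≤ extCard P σ n := by
  induction hk : n - σ.length generalizing σ ℓ with
  | zero =>
    obtain rfl : n = σ.length := by omega
    obtain rfl : ℓ = 0 := by have := h σ rfl hσ (List.prefix_refl σ); omega
    exact one_le_extCard_length hσ
  | succ k ih =>
    refine two_pow_le_extCard_of_children hσ (by omega) (fun b ℓ' hb h' => ?_) h
    have hlen : (σ ++ [b]).length = σ.length + 1 := by simp
    exact ih (σ ++ [b]) hb ℓ' (by omega) h' (by omega)

theorem stmt3 (P : Set (ℕ → Bool)) (hPne : P.Nonempty) (hPc : IsClosed P)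
    (σ : List Bool) (hσ : extn P σ) (n ℓ : ℕ) (hn : σ.length ≤ n)
    (h : ∀ τ : List Bool, τ.length = n → extn P τ → σ <+: τ →
      theta P σ + ℓ ≤ theta P τ) :
    2 ^ ℓ ≤ extCard P σ n :=
  stmt3_general P σ hσ n ℓ hn h
end
end

section
/- Suppose P is a closed subset of 2^ω and c ∈ ω is such that for every closed Q ⊆ P and all k ≥ n with #(T_Q↾n) = 1, one has #(T_Q↾k)/#(T_Q↾n) ≤ c · #(T_P↾k)/#(T_P↾n). Then the same inequality #(T_Q↾k)/#(T_Q↾n) ≤ c · #(T_P↾k)/#(T_P↾n) holds for all closed Q ⊆ P and all k ≥ n (without the restriction #(T_Q↾n)=1). -/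
open MeasureTheory Filter

noncomputable section

lemma level_finite (Q : Set (ℕ → Bool)) (n : ℕ) : (level Q n).Finite :=
  (List.finite_length_eq Bool n).subset fun _ hσ => hσ.1

lemma isClosed_cyl (σ : List Bool) : IsClosed (cyl σ) := by
  have : cyl σ = ⋂ i ∈ Finset.range σ.length, {X : ℕ → Bool | X i = σ.getD i false} := by
    ext X; simp [cyl]
  rw [this]
  exact isClosed_biInter fun i _ => isClosed_eq (continuous_apply i) continuous_const

lemma getD_eq_of_cyl {σ τ : List Bool} {X : ℕ → Bool} (hτ : X ∈ cyl τ) (hσ : X ∈ cyl σ)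
    {i : ℕ} (hiτ : i < τ.length) (hiσ : i < σ.length) :
    τ.getD i false = σ.getD i false := by
  rw [← hτ i hiτ, ← hσ i hiσ]

lemma eq_of_cyl {σ τ : List Bool} {X : ℕ → Bool} (hτ : X ∈ cyl τ) (hσ : X ∈ cyl σ)
    (hlen : τ.length = σ.length) : τ = σ := by
  apply List.ext_getElem hlen
  intro i h1 h2
  rw [← List.getD_eq_getElem τ false h1, ← List.getD_eq_getElem σ false h2]
  exact getD_eq_of_cyl hτ hσ h1 h2

lemma level_inter_self {Q : Set (ℕ → Bool)} {σ : List Bool} {n : ℕ} (hσ : σ ∈ level Q n) :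
    level (cyl σ ∩ Q) n = {σ} := by
  ext τ
  simp only [level, Set.mem_setOf_eq, Set.mem_singleton_iff]
  constructor
  · rintro ⟨hlen, X, hXτ, hXσ, _⟩
    exact eq_of_cyl hXτ hXσ (hlen.trans hσ.1.symm)
  · rintro rfl
    refine ⟨hσ.1, ?_⟩
    obtain ⟨X, hX1, hX2⟩ := hσ.2
    exact ⟨X, hX1, hX1, hX2⟩

lemma cyl_subset_take (τ : List Bool) (n : ℕ) : cyl τ ⊆ cyl (τ.take n) := by
  intro X hX i hi
  have hi' : i < τ.length := lt_of_lt_of_le hi (by simpa using List.length_take_le n τ)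
  rw [hX i hi', List.getD_eq_getElem τ false hi',
    List.getD_eq_getElem (τ.take n) false hi, List.getElem_take]

lemma take_mem_level {Q : Set (ℕ → Bool)} {τ : List Bool} {n k : ℕ} (hnk : n ≤ k)
    (hτ : τ ∈ level Q k) : τ.take n ∈ level Q n := by
  obtain ⟨X, hX1, hX2⟩ := hτ.2
  exact ⟨by simp [List.length_take, hτ.1, hnk], X, cyl_subset_take τ n hX1, hX2⟩

lemma mem_level_inter {Q : Set (ℕ → Bool)} {τ : List Bool} {n k : ℕ}
    (hτ : τ ∈ level Q k) : τ ∈ level (cyl (τ.take n) ∩ Q) k := by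
  obtain ⟨X, hX1, hX2⟩ := hτ.2
  exact ⟨hτ.1, X, hX1, cyl_subset_take τ n hX1, hX2⟩

theorem stmt11 (P : Set (ℕ → Bool)) (hPne : P.Nonempty) (hPc : IsClosed P) (c : ℕ)
    (h : ∀ Q : Set (ℕ → Bool), IsClosed Q → Q ⊆ P → ∀ n k : ℕ, n ≤ k →
      levelCard Q n = 1 →
      levelCard Q k * levelCard P n ≤ c * (levelCard P k * levelCard Q n)) :
    ∀ Q : Set (ℕ → Bool), IsClosed Q → Q ⊆ P → ∀ n k : ℕ, n ≤ k →
      levelCard Q k * levelCard P n ≤ c * (levelCard P k * levelCard Q n) := by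
  intro Q hQc hQP n k hnk
  classical
  have hfn := level_finite Q n
  have hfk := level_finite Q k
  set F : List Bool → Finset (List Bool) :=
    fun σ => (level_finite (cyl σ ∩ Q) k).toFinset with hF
  have hsub : hfk.toFinset ⊆ hfn.toFinset.biUnion F := by
    intro τ hτ
    rw [Set.Finite.mem_toFinset] at hτ
    rw [Finset.mem_biUnion]
    exact ⟨τ.take n, by rw [Set.Finite.mem_toFinset]; exact take_mem_level hnk hτ,
      by rw [hF, Set.Finite.mem_toFinset]; exact mem_level_inter hτ⟩
  have hcard : levelCard Q k ≤ ∑ σ ∈ hfn.toFinset, levelCard (cyl σ ∩ Q) k := by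
    calc levelCard Q k = hfk.toFinset.card := Set.ncard_eq_toFinset_card _ hfk
      _ ≤ (hfn.toFinset.biUnion F).card := Finset.card_le_card hsub
      _ ≤ ∑ σ ∈ hfn.toFinset, (F σ).card := Finset.card_biUnion_le
      _ = ∑ σ ∈ hfn.toFinset, levelCard (cyl σ ∩ Q) k := by
          refine Finset.sum_congr rfl fun σ _ => ?_
          rw [hF]; exact (Set.ncard_eq_toFinset_card _ _).symm
  have hbound : ∀ σ ∈ hfn.toFinset,
      levelCard (cyl σ ∩ Q) k * levelCard P n ≤ c * levelCard P k := by
    intro σ hσ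
    rw [Set.Finite.mem_toFinset] at hσ
    have h1 : levelCard (cyl σ ∩ Q) n = 1 := by
      rw [levelCard, level_inter_self hσ, Set.ncard_singleton]
    have := h (cyl σ ∩ Q) ((isClosed_cyl σ).inter hQc)
      (Set.inter_subset_right.trans hQP) n k hnk h1
    rwa [h1, mul_one] at this
  have hQn : hfn.toFinset.card = levelCard Q n := (Set.ncard_eq_toFinset_card _ hfn).symm
  calc levelCard Q k * levelCard P n
      ≤ (∑ σ ∈ hfn.toFinset, levelCard (cyl σ ∩ Q) k) * levelCard P n :=
        Nat.mul_le_mul_right _ hcard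
    _ = ∑ σ ∈ hfn.toFinset, levelCard (cyl σ ∩ Q) k * levelCard P n := Finset.sum_mul ..
    _ ≤ ∑ _σ ∈ hfn.toFinset, c * levelCard P k := Finset.sum_le_sum hbound
    _ = levelCard Q n * (c * levelCard P k) := by rw [Finset.sum_const, smul_eq_mul, hQn]
    _ = c * (levelCard P k * levelCard Q n) := by ring
end
end

section
/- Let P be a closed subset of 2^ω of positive Lebesgue measure, let X ∈ P, and suppose the lower dyadic density ρ(P | X) > 2^{-k}. Then there is a constant N such that θ_P(X↾n) ≥ n/k − N for all n. In particular, for every sufficiently large ℓ, among any k consecutive levels ℓ+1, …, ℓ+k there is some i with both X↾(ℓ+i) ∈ T_P and (X↾(ℓ+i))^↷ ∈ T_P. -/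
open MeasureTheory Filter

noncomputable section

lemma prefixList_succ (X : ℕ → Bool) (n : ℕ) :
    prefixList X (n + 1) = prefixList X n ++ [X n] := by
  simp only [prefixList, List.ofFn_succ', List.concat_eq_append]
  rfl

lemma flipAt_prefixList (X : ℕ → Bool) {m n : ℕ} (h : m < n) :
    flipAt (prefixList X n) m = prefixList X m ++ [!X m] := by
  have htake : (prefixList X n).take m = prefixList X m :=
    List.ext_getElem (by simp [prefixList, h.le]) fun i _ _ => by simp [prefixList]
  rw [flipAt, htake, List.getD_eq_getElem _ _ (by simpa [prefixList_length] using h)]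
  simp [prefixList]

lemma mem_cyl_iff (Z : ℕ → Bool) (σ : List Bool) :
    Z ∈ cyl σ ↔ prefixList Z σ.length = σ := by
  constructor
  · intro h
    refine List.ext_getElem (prefixList_length _ _) fun i hi hiσ => ?_
    simp [prefixList, h i hiσ, List.getElem?_eq_getElem hiσ]
  · intro h i hi
    rw [← h]
    simp [prefixList, hi]

lemma mem_cyl_prefixList_iff (Z X : ℕ → Bool) (n : ℕ) :
    Z ∈ cyl (prefixList X n) ↔ prefixList Z n = prefixList X n := by
  rw [mem_cyl_iff, prefixList_length]

lemma mem_cyl_prefixList_append_iff (Z X : ℕ → Bool) (n : ℕ) (b : Bool) :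
    Z ∈ cyl (prefixList X n ++ [b]) ↔ prefixList Z n = prefixList X n ∧ Z n = b := by
  rw [mem_cyl_iff]
  simp [prefixList_length, prefixList_succ]

open Classical in
lemma theta_prefixList (P : Set (ℕ → Bool)) (X : ℕ → Bool) (n : ℕ) :
    theta P (prefixList X n) = Nat.count (fun m => extn P (prefixList X m ++ [!X m])) n := by
  rw [Nat.count_eq_card_filter_range, ← Set.ncard_coe_finset, theta, prefixList_length]
  congr 1
  ext m
  simp only [Set.mem_ofPred_eq, Finset.coe_filter, Finset.mem_range]
  exact and_congr_right fun hm => by rw [flipAt_prefixList X hm]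

lemma inter_cyl_prefixList_succ {P : Set (ℕ → Bool)} {X : ℕ → Bool} {n : ℕ}
    (h : ¬ extn P (prefixList X n ++ [!X n])) :
    P ∩ cyl (prefixList X (n + 1)) = P ∩ cyl (prefixList X n) := by
  ext Z
  simp only [Set.mem_inter_iff, prefixList_succ, mem_cyl_prefixList_append_iff,
    mem_cyl_prefixList_iff]
  refine ⟨fun ⟨hZ, heq, _⟩ => ⟨hZ, heq⟩, fun ⟨hZ, heq⟩ => ⟨hZ, heq, ?_⟩⟩
  by_contra hne
  exact h ⟨Z, (mem_cyl_prefixList_append_iff Z X n _).2 ⟨heq, Bool.eq_not.mpr hne⟩, hZ⟩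

lemma inter_cyl_prefixList_add {P : Set (ℕ → Bool)} {X : ℕ → Bool} {ℓ k : ℕ}
    (h : ∀ j < k, ¬ extn P (prefixList X (ℓ + j) ++ [!X (ℓ + j)])) :
    P ∩ cyl (prefixList X (ℓ + k)) = P ∩ cyl (prefixList X ℓ) := by
  induction k with
  | zero => rfl
  | succ k ih =>
    rw [← add_assoc, inter_cyl_prefixList_succ (h k k.lt_succ_self),
      ih fun j hj => h j (hj.trans k.lt_succ_self)]

lemma measure_inter_cyl_div_le_of_forall_not_extn {P : Set (ℕ → Bool)} {μ : Measure (ℕ → Bool)}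
    (hμ : ∀ σ : List Bool, μ (cyl σ) = (1/2 : ENNReal) ^ σ.length) {X : ℕ → Bool} {ℓ k : ℕ}
    (h : ∀ j < k, ¬ extn P (prefixList X (ℓ + j) ++ [!X (ℓ + j)])) :
    μ (P ∩ cyl (prefixList X ℓ)) / μ (cyl (prefixList X ℓ)) ≤ (1/2 : ENNReal) ^ k := by
  have hmass : μ (P ∩ cyl (prefixList X ℓ)) ≤ (1/2 : ENNReal) ^ ℓ * (1/2) ^ k := by
    calc μ (P ∩ cyl (prefixList X ℓ)) = μ (P ∩ cyl (prefixList X (ℓ + k))) := by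
          rw [inter_cyl_prefixList_add h]
      _ ≤ μ (cyl (prefixList X (ℓ + k))) := measure_mono Set.inter_subset_right
      _ = (1/2 : ENNReal) ^ ℓ * (1/2) ^ k := by rw [hμ, prefixList_length, pow_add]
  rw [hμ, prefixList_length]
  exact ENNReal.div_le_of_le_mul' hmass

lemma exists_extn_flip_of_lt_liminf {P : Set (ℕ → Bool)} {μ : Measure (ℕ → Bool)}
    (hμ : ∀ σ : List Bool, μ (cyl σ) = (1/2 : ENNReal) ^ σ.length) {X : ℕ → Bool} {k : ℕ}
    (hdens : (1/2 : ENNReal) ^ k <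
      liminf (fun n => μ (P ∩ cyl (prefixList X n)) / μ (cyl (prefixList X n))) atTop) :
    ∃ N, ∀ ℓ ≥ N, ∃ m, ℓ ≤ m ∧ m < ℓ + k ∧ extn P (prefixList X m ++ [!X m]) := by
  obtain ⟨N, hN⟩ := eventually_atTop.mp (eventually_lt_of_lt_liminf hdens)
  refine ⟨N, fun ℓ hℓ => ?_⟩
  by_contra! hnone
  refine (hN ℓ hℓ).not_ge (measure_inter_cyl_div_le_of_forall_not_extn hμ fun j hj => ?_)
  exact hnone (ℓ + j) le_self_add (by omega)

lemma Nat.le_count_add_mul {p : ℕ → Prop} [DecidablePred p] {N k : ℕ}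
    (h : ∀ ℓ ≥ N, ∃ m, ℓ ≤ m ∧ m < ℓ + k ∧ p m) (t : ℕ) :
    t ≤ Nat.count p (N + t * k) := by
  induction t with
  | zero => exact Nat.zero_le _
  | succ t ih =>
    obtain ⟨m, hlo, hhi, hm⟩ := h (N + t * k) le_self_add
    calc t + 1 ≤ Nat.count p m + 1 := by grw [ih, Nat.count_monotone p hlo]
      _ ≤ Nat.count p (N + (t + 1) * k) :=
        Nat.count_strict_mono hm (by rw [add_mul, one_mul, ← add_assoc]; exact hhi)

lemma Nat.le_mul_count_add {p : ℕ → Prop} [DecidablePred p] {N k : ℕ}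
    (h : ∀ ℓ ≥ N, ∃ m, ℓ ≤ m ∧ m < ℓ + k ∧ p m) (n : ℕ) :
    n ≤ k * (Nat.count p n + (N + 1)) := by
  obtain ⟨_, _, hk, _⟩ := h N le_rfl
  have hN : N ≤ k * N := Nat.le_mul_of_pos_left N (by omega)
  have hsplit : k * (Nat.count p n + (N + 1)) = k * (Nat.count p n + 1) + k * N := by ring
  rcases lt_or_ge n N with hn | hn
  · omega
  have hcount : (n - N) / k ≤ Nat.count p n :=
    (Nat.le_count_add_mul h _).trans (Nat.count_monotone p (by
      have := Nat.div_mul_le_self (n - N) k; omega))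
  have hrem : n - N < k * ((n - N) / k + 1) := Nat.lt_mul_div_succ _ (by omega)
  have : k * ((n - N) / k + 1) ≤ k * (Nat.count p n + 1) := by gcongr
  omega

theorem stmt16_general (P : Set (ℕ → Bool))
    (μ : Measure (ℕ → Bool))
    (hμ : ∀ σ : List Bool, μ (cyl σ) = (1/2 : ENNReal) ^ σ.length)
    (X : ℕ → Bool) (hX : X ∈ P) (k : ℕ)
    (hdens : (1/2 : ENNReal) ^ k <
      liminf (fun n => μ (P ∩ cyl (prefixList X n)) / μ (cyl (prefixList X n))) atTop) :
    (∃ N : ℕ, ∀ n : ℕ, n ≤ k * (theta P (prefixList X n) + N)) ∧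
    (∃ N : ℕ, ∀ ℓ : ℕ, N ≤ ℓ → ∃ i : ℕ, 1 ≤ i ∧ i ≤ k ∧
      extn P (prefixList X (ℓ + i)) ∧
      extn P (flipAt (prefixList X (ℓ + i)) (ℓ + i - 1))) := by
  obtain ⟨N, hN⟩ := exists_extn_flip_of_lt_liminf hμ hdens
  refine ⟨⟨N + 1, fun n => ?_⟩, ⟨N, fun ℓ hℓ => ?_⟩⟩
  · classical
    rw [theta_prefixList]
    exact Nat.le_mul_count_add hN n
  · obtain ⟨m, hlo, hhi, hm⟩ := hN ℓ hℓ
    refine ⟨m + 1 - ℓ, by omega, by omega, extn_prefixList hX _, ?_⟩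
    rwa [flipAt_prefixList X (by omega), show ℓ + (m + 1 - ℓ) - 1 = m by omega]

theorem stmt16 (P : Set (ℕ → Bool)) (hPc : IsClosed P)
    (μ : Measure (ℕ → Bool))
    (hμ : ∀ σ : List Bool, μ (cyl σ) = (1/2 : ENNReal) ^ σ.length)
    (hpos : 0 < μ P) (X : ℕ → Bool) (hX : X ∈ P) (k : ℕ)
    (hdens : (1/2 : ENNReal) ^ k <
      liminf (fun n => μ (P ∩ cyl (prefixList X n)) / μ (cyl (prefixList X n))) atTop) :
    (∃ N : ℕ, ∀ n : ℕ, n ≤ k * (theta P (prefixList X n) + N)) ∧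
    (∃ N : ℕ, ∀ ℓ : ℕ, N ≤ ℓ → ∃ i : ℕ, 1 ≤ i ∧ i ≤ k ∧
      extn P (prefixList X (ℓ + i)) ∧
      extn P (flipAt (prefixList X (ℓ + i)) (ℓ + i - 1))) :=
  stmt16_general P μ hμ X hX k hdens
end
end

section
/- Consider the closed set P ⊆ 2^ω consisting of all sequences 0⌢X with X(4n) = X(4n+1) = 0 for all n, together with all sequences 1⌢X with X(4n+2) = X(4n+3) = 1 for all n. Then for all n, λ([0]∩[T_P↾(4n+1)])/λ([T_P↾(4n+1)]) = 1/2 and λ([0]∩[T_P↾(4n+3)])/λ([T_P↾(4n+3)]) = 1/5; hence the limiting relative measure λ_P(0) = lim_{m→∞} λ([0]∩[T_P↾m])/λ([T_P↾m]) does not exist. -/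
open MeasureTheory Filter

noncomputable section

/-- The class of Example 3: sequences 0⌢X with X(4n)=X(4n+1)=0, together with
sequences 1⌢X with X(4n+2)=X(4n+3)=1. -/
def exP : Set (ℕ → Bool) :=
  {Z | Z 0 = false ∧ ∀ n : ℕ, Z (4 * n + 1) = false ∧ Z (4 * n + 2) = false} ∪
  {Z | Z 0 = true ∧ ∀ n : ℕ, Z (4 * n + 3) = true ∧ Z (4 * n + 4) = true}

/-! ### Auxiliary machinery -/

lemma constraint_measurable (F : Finset ℕ) (v : ℕ → Bool) :
    MeasurableSet {Z : ℕ → Bool | ∀ i ∈ F, Z i = v i} := by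
  have : {Z : ℕ → Bool | ∀ i ∈ F, Z i = v i} = ⋂ i ∈ F, {Z : ℕ → Bool | Z i = v i} := by
    ext Z; simp
  rw [this]
  refine MeasurableSet.biInter F.countable_toSet fun i _ => ?_
  have : {Z : ℕ → Bool | Z i = v i} = (fun Z : ℕ → Bool => Z i) ⁻¹' {v i} := rfl
  rw [this]
  exact (measurable_pi_apply i) (measurableSet_singleton (v i))

lemma meas_constraint (μ : Measure (ℕ → Bool))
    (hμ : ∀ σ : List Bool, μ (cyl σ) = (1/2 : ENNReal) ^ σ.length)
    (m : ℕ) (k : ℕ) : ∀ (F : Finset ℕ) (v : ℕ → Bool), F ⊆ Finset.range m →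
    m - F.card = k →
    μ {Z | ∀ i ∈ F, Z i = v i} = (1/2 : ENNReal) ^ F.card := by
  induction k with
  | zero =>
    intro F v hF hk
    have hcard : F.card = m := by
      have := Finset.card_le_card hF
      simp [Finset.card_range] at this
      omega
    have hFeq : F = Finset.range m := Finset.eq_of_subset_of_card_le hF (by simp [hcard])
    subst hFeq
    have hset : {Z : ℕ → Bool | ∀ i ∈ Finset.range m, Z i = v i}
        = cyl (List.ofFn fun i : Fin m => v i) := by
      ext Z
      simp only [Set.mem_setOf_eq, cyl, Finset.mem_range, List.length_ofFn]
      constructor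
      · intro h i hi
        rw [List.getD_eq_getElem _ _ (by simpa using hi)]
        simp [h i hi]
      · intro h i hi
        have := h i hi
        rw [List.getD_eq_getElem _ _ (by simpa using hi)] at this
        simpa using this
    rw [hset, hμ, hcard]
    simp
  | succ k ih =>
    intro F v hF hk
    have hlt : F.card < m := by
      have := Finset.card_le_card hF
      simp [Finset.card_range] at this
      omega
    have hss : F ⊂ Finset.range m := by
      refine hF.ssubset_of_ne ?_
      intro h
      rw [h, Finset.card_range] at hlt
      omega
    obtain ⟨j, hjm, hjF⟩ := Finset.exists_of_ssubset hss
    have hsplit : {Z : ℕ → Bool | ∀ i ∈ F, Z i = v i}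
        = {Z : ℕ → Bool | ∀ i ∈ insert j F, Z i = Function.update v j true i}
          ∪ {Z : ℕ → Bool | ∀ i ∈ insert j F, Z i = Function.update v j false i} := by
      ext Z
      simp only [Set.mem_setOf_eq, Set.mem_union, Finset.mem_insert]
      constructor
      · intro h
        cases hZj : Z j with
        | true =>
          left
          rintro i (rfl | hi)
          · simp [hZj]
          · rw [Function.update_of_ne (by rintro rfl; exact hjF hi)]
            exact h i hi
        | false =>
          right
          rintro i (rfl | hi)
          · simp [hZj]
          · rw [Function.update_of_ne (by rintro rfl; exact hjF hi)]
            exact h i hi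
      · rintro (h | h) i hi
        · have := h i (Or.inr hi)
          rwa [Function.update_of_ne (by rintro rfl; exact hjF hi)] at this
        · have := h i (Or.inr hi)
          rwa [Function.update_of_ne (by rintro rfl; exact hjF hi)] at this
    have hdisj : Disjoint {Z : ℕ → Bool | ∀ i ∈ insert j F, Z i = Function.update v j true i}
        {Z : ℕ → Bool | ∀ i ∈ insert j F, Z i = Function.update v j false i} := by
      rw [Set.disjoint_left]
      intro Z h1 h2
      have e1 := h1 j (Finset.mem_insert_self j F)
      have e2 := h2 j (Finset.mem_insert_self j F)
      simp at e1 e2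
      rw [e1] at e2
      simp at e2
    have hins : insert j F ⊆ Finset.range m := Finset.insert_subset hjm hF
    have hcard : (insert j F).card = F.card + 1 := Finset.card_insert_of_notMem hjF
    have h1 := ih (insert j F) (Function.update v j true) hins (by omega)
    have h2 := ih (insert j F) (Function.update v j false) hins (by omega)
    rw [hsplit, measure_union hdisj (constraint_measurable _ _), h1, h2, hcard, pow_succ]
    rw [← mul_add, ENNReal.add_halves]
    simp

def FF0 (m : ℕ) : Finset ℕ := (Finset.range m).filter (fun i => i = 0 ∨ i % 4 = 1 ∨ i % 4 = 2)
def FF1 (m : ℕ) : Finset ℕ := (Finset.range m).filter (fun i => i % 4 = 0 ∨ i % 4 = 3)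

lemma levelUnion_eq_s19 (m : ℕ) (hm : 1 ≤ m) :
    levelUnion exP m =
      {Z : ℕ → Bool | ∀ i ∈ FF0 m, Z i = false} ∪ {Z : ℕ → Bool | ∀ i ∈ FF1 m, Z i = true} := by
  ext Z
  simp only [levelUnion, Set.mem_iUnion, Set.mem_union, Set.mem_setOf_eq]
  constructor
  · rintro ⟨σ, ⟨hlen, W, hWσ, hWP⟩, hZσ⟩
    have hZW : ∀ i, i < m → Z i = W i := by
      intro i hi
      rw [hZσ i (by omega : i < σ.length), hWσ i (by omega : i < σ.length)]
    rcases hWP with ⟨h0, hc⟩ | ⟨h0, hc⟩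
    · left
      intro i hi
      rw [FF0, Finset.mem_filter, Finset.mem_range] at hi
      obtain ⟨him, hp⟩ := hi
      rw [hZW i him]
      rcases hp with rfl | h1 | h2
      · exact h0
      · obtain ⟨k, rfl⟩ : ∃ k, i = 4 * k + 1 := ⟨i / 4, by omega⟩
        exact (hc k).1
      · obtain ⟨k, rfl⟩ : ∃ k, i = 4 * k + 2 := ⟨i / 4, by omega⟩
        exact (hc k).2
    · right
      intro i hi
      rw [FF1, Finset.mem_filter, Finset.mem_range] at hi
      obtain ⟨him, hp⟩ := hi
      rw [hZW i him]
      rcases hp with h1 | h2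
      · rcases Nat.eq_zero_or_pos i with rfl | hipos
        · exact h0
        · obtain ⟨k, rfl⟩ : ∃ k, i = 4 * k + 4 := ⟨i / 4 - 1, by omega⟩
          exact (hc k).2
      · obtain ⟨k, rfl⟩ : ∃ k, i = 4 * k + 3 := ⟨i / 4, by omega⟩
        exact (hc k).1
  · intro h
    refine ⟨List.ofFn (fun i : Fin m => Z i), ⟨by simp, ?_⟩, ?_⟩
    · rcases h with h | h
      · refine ⟨fun i => if i < m then Z i else false, ?_, Or.inl ⟨?_, ?_⟩⟩
        · intro i hi
          simp only [List.length_ofFn] at hi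
          rw [List.getD_eq_getElem _ _ (by simpa using hi)]
          simp [hi]
        · have h0m : (0:ℕ) < m := by omega
          simp only [h0m, if_true]
          exact h 0 (by simp [FF0, Finset.mem_filter, Finset.mem_range]; omega)
        · intro n
          constructor
          · by_cases hlt : 4 * n + 1 < m
            · simp only [hlt, if_pos]
              exact h _ (by simp [FF0, Finset.mem_filter, Finset.mem_range]; omega)
            · simp [hlt]
          · by_cases hlt : 4 * n + 2 < m
            · simp only [hlt, if_pos]
              exact h _ (by simp [FF0, Finset.mem_filter, Finset.mem_range]; omega)
            · simp [hlt]
      · refine ⟨fun i => if i < m then Z i else true, ?_, Or.inr ⟨?_, ?_⟩⟩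
        · intro i hi
          simp only [List.length_ofFn] at hi
          rw [List.getD_eq_getElem _ _ (by simpa using hi)]
          simp [hi]
        · have h0m : (0:ℕ) < m := by omega
          simp only [h0m, if_true]
          exact h 0 (by simp [FF1, Finset.mem_filter, Finset.mem_range]; omega)
        · intro n
          constructor
          · by_cases hlt : 4 * n + 3 < m
            · simp only [hlt, if_pos]
              exact h _ (by simp [FF1, Finset.mem_filter, Finset.mem_range]; omega)
            · simp [hlt]
          · by_cases hlt : 4 * n + 4 < m
            · simp only [hlt, if_pos]
              exact h _ (by simp [FF1, Finset.mem_filter, Finset.mem_range]; omega)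
            · simp [hlt]
    · intro i hi
      simp only [List.length_ofFn] at hi
      rw [List.getD_eq_getElem _ _ (by simpa using hi)]
      simp

lemma card_step_pos {p : ℕ → Prop} [DecidablePred p] {m : ℕ} (h : p m) :
    ((Finset.range (m+1)).filter p).card = ((Finset.range m).filter p).card + 1 := by
  rw [Finset.range_add_one, Finset.filter_insert, if_pos h,
    Finset.card_insert_of_notMem (by simp)]

lemma card_step_neg {p : ℕ → Prop} [DecidablePred p] {m : ℕ} (h : ¬ p m) :
    ((Finset.range (m+1)).filter p).card = ((Finset.range m).filter p).card := by
  rw [Finset.range_add_one, Finset.filter_insert, if_neg h]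

lemma card_FF0_1 (n : ℕ) : (FF0 (4*n+1)).card = 2*n+1 := by
  induction n with
  | zero => decide
  | succ n ih =>
    rw [FF0] at ih ⊢
    rw [show 4*(n+1)+1 = (4*n+4)+1 by ring, card_step_neg (by omega),
      show 4*n+4 = (4*n+3)+1 by ring, card_step_neg (by omega),
      show 4*n+3 = (4*n+2)+1 by ring, card_step_pos (by omega),
      show 4*n+2 = (4*n+1)+1 by ring, card_step_pos (by omega), ih]
    ring

lemma card_FF0_3 (n : ℕ) : (FF0 (4*n+3)).card = 2*n+3 := by
  have := card_FF0_1 n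
  rw [FF0] at this ⊢
  rw [show 4*n+3 = (4*n+2)+1 by ring, card_step_pos (by omega),
    show 4*n+2 = (4*n+1)+1 by ring, card_step_pos (by omega), this]

lemma card_FF1_1 (n : ℕ) : (FF1 (4*n+1)).card = 2*n+1 := by
  induction n with
  | zero => decide
  | succ n ih =>
    rw [FF1] at ih ⊢
    rw [show 4*(n+1)+1 = (4*n+4)+1 by ring, card_step_pos (by omega),
      show 4*n+4 = (4*n+3)+1 by ring, card_step_pos (by omega),
      show 4*n+3 = (4*n+2)+1 by ring, card_step_neg (by omega),
      show 4*n+2 = (4*n+1)+1 by ring, card_step_neg (by omega), ih]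
    ring

lemma card_FF1_3 (n : ℕ) : (FF1 (4*n+3)).card = 2*n+1 := by
  have := card_FF1_1 n
  rw [FF1] at this ⊢
  rw [show 4*n+3 = (4*n+2)+1 by ring, card_step_neg (by omega),
    show 4*n+2 = (4*n+1)+1 by ring, card_step_neg (by omega), this]

lemma half_pow_ne_zero (k : ℕ) : ((1/2 : ENNReal))^k ≠ 0 := by
  apply pow_ne_zero
  simp

lemma half_pow_ne_top (k : ℕ) : ((1/2 : ENNReal))^k ≠ ⊤ := by
  apply ENNReal.pow_ne_top
  simp [ENNReal.div_eq_top]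

lemma ratio1 (k : ℕ) :
    ((1/2 : ENNReal)^k) / ((1/2:ENNReal)^k + (1/2:ENNReal)^k) = 1/2 := by
  have h : (1/2:ENNReal)^k + (1/2:ENNReal)^k = (1/2:ENNReal)^k * 2 := by
    rw [mul_two]
  rw [h, show ((1/2:ENNReal)^k : ENNReal) / ((1/2:ENNReal)^k * 2)
      = ((1/2:ENNReal)^k * 1) / ((1/2:ENNReal)^k * 2) by rw [mul_one]]
  rw [ENNReal.mul_div_mul_left _ _ (half_pow_ne_zero k) (half_pow_ne_top k)]

lemma ratio2 (k : ℕ) :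
    ((1/2 : ENNReal)^(k+2)) / ((1/2:ENNReal)^(k+2) + (1/2:ENNReal)^k) = 1/5 := by
  have key : ((1/2:ENNReal))^2 * 4 = 1 := by
    rw [one_div, ← ENNReal.inv_pow, show ((2:ENNReal))^2 = 4 by norm_num]
    exact ENNReal.inv_mul_cancel (by norm_num) (by norm_num)
  have h4 : (1/2:ENNReal)^k = (1/2:ENNReal)^(k+2) * 4 := by
    rw [pow_add, mul_assoc, key, mul_one]
  have h : (1/2:ENNReal)^(k+2) + (1/2:ENNReal)^k = (1/2:ENNReal)^(k+2) * 5 := by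
    rw [h4, ← mul_one ((1/2:ENNReal)^(k+2)), mul_assoc, mul_assoc, ← mul_add]
    norm_num
  rw [h, show ((1/2:ENNReal)^(k+2) : ENNReal) / ((1/2:ENNReal)^(k+2) * 5)
      = ((1/2:ENNReal)^(k+2) * 1) / ((1/2:ENNReal)^(k+2) * 5) by rw [mul_one]]
  rw [ENNReal.mul_div_mul_left _ _ (half_pow_ne_zero _) (half_pow_ne_top _)]

lemma zero_mem_FF0 {m : ℕ} (hm : 1 ≤ m) : 0 ∈ FF0 m := by
  simp [FF0, Finset.mem_filter, Finset.mem_range]; omega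

lemma zero_mem_FF1 {m : ℕ} (hm : 1 ≤ m) : 0 ∈ FF1 m := by
  simp [FF1, Finset.mem_filter, Finset.mem_range]; omega

lemma cyl_false_eq : cyl [false] = {Z : ℕ → Bool | Z 0 = false} := by
  ext Z
  constructor
  · intro h
    exact h 0 (by simp)
  · intro h i hi
    simp only [List.length_singleton] at hi
    have : i = 0 := by omega
    subst this
    simpa using h

lemma key_measures (μ : Measure (ℕ → Bool))
    (hμ : ∀ σ : List Bool, μ (cyl σ) = (1/2 : ENNReal) ^ σ.length)
    (m : ℕ) (hm : 1 ≤ m) :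
    μ (cyl [false] ∩ levelUnion exP m) = (1/2 : ENNReal) ^ (FF0 m).card ∧
    μ (levelUnion exP m) = (1/2 : ENNReal) ^ (FF0 m).card + (1/2 : ENNReal) ^ (FF1 m).card := by
  set S0 : Set (ℕ → Bool) := {Z : ℕ → Bool | ∀ i ∈ FF0 m, Z i = (fun _ => false) i} with hS0
  set S1 : Set (ℕ → Bool) := {Z : ℕ → Bool | ∀ i ∈ FF1 m, Z i = (fun _ => true) i} with hS1
  have hLU : levelUnion exP m = S0 ∪ S1 := levelUnion_eq_s19 m hm
  have hμ0 : μ S0 = (1/2 : ENNReal) ^ (FF0 m).card :=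
    meas_constraint μ hμ m (m - (FF0 m).card) (FF0 m) _ (Finset.filter_subset _ _) rfl
  have hμ1 : μ S1 = (1/2 : ENNReal) ^ (FF1 m).card :=
    meas_constraint μ hμ m (m - (FF1 m).card) (FF1 m) _ (Finset.filter_subset _ _) rfl
  have hdisj : Disjoint S0 S1 := by
    rw [Set.disjoint_left]
    intro Z h0 h1
    have e0 := h0 0 (zero_mem_FF0 hm)
    have e1 := h1 0 (zero_mem_FF1 hm)
    rw [e0] at e1
    simp at e1
  have hsub : S0 ⊆ cyl [false] := by
    intro Z hZ
    rw [cyl_false_eq]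
    exact hZ 0 (zero_mem_FF0 hm)
  have hint : cyl [false] ∩ levelUnion exP m = S0 := by
    rw [hLU, Set.inter_union_distrib_left, Set.inter_eq_right.mpr hsub]
    have : cyl [false] ∩ S1 = ∅ := by
      ext Z
      simp only [Set.mem_inter_iff, Set.mem_empty_iff_false, iff_false]
      rintro ⟨hc, h1⟩
      rw [cyl_false_eq] at hc
      have := h1 0 (zero_mem_FF1 hm)
      rw [hc] at this
      simp at this
    rw [this, Set.union_empty]
  constructor
  · rw [hint, hμ0]
  · rw [hLU, measure_union hdisj (constraint_measurable _ _), hμ0, hμ1]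

theorem stmt19 (μ : Measure (ℕ → Bool))
    (hμ : ∀ σ : List Bool, μ (cyl σ) = (1/2 : ENNReal) ^ σ.length) :
    (∀ n : ℕ,
      μ (cyl [false] ∩ levelUnion exP (4 * n + 1)) / μ (levelUnion exP (4 * n + 1)) =
        (1/2 : ENNReal) ∧
      μ (cyl [false] ∩ levelUnion exP (4 * n + 3)) / μ (levelUnion exP (4 * n + 3)) =
        (1/5 : ENNReal)) ∧
    ¬ ∃ L : ENNReal,
      Tendsto (fun m => μ (cyl [false] ∩ levelUnion exP m) / μ (levelUnion exP m))
        atTop (nhds L) := by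
  have main : ∀ n : ℕ,
      μ (cyl [false] ∩ levelUnion exP (4 * n + 1)) / μ (levelUnion exP (4 * n + 1)) =
        (1/2 : ENNReal) ∧
      μ (cyl [false] ∩ levelUnion exP (4 * n + 3)) / μ (levelUnion exP (4 * n + 3)) =
        (1/5 : ENNReal) := by
    intro n
    obtain ⟨e1, e2⟩ := key_measures μ hμ (4 * n + 1) (by omega)
    obtain ⟨e3, e4⟩ := key_measures μ hμ (4 * n + 3) (by omega)
    constructor
    · rw [e1, e2, card_FF0_1 n, card_FF1_1 n]
      exact ratio1 _
    · rw [e3, e4, card_FF0_3 n, card_FF1_3 n,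
        show 2*n+3 = (2*n+1)+2 by ring]
      exact ratio2 _
  refine ⟨main, ?_⟩
  rintro ⟨L, hL⟩
  have htend : Tendsto (fun n : ℕ => 4 * n + 1) atTop atTop :=
    tendsto_atTop_mono (fun n => by simp only [id_eq]; omega) tendsto_id
  have htend3 : Tendsto (fun n : ℕ => 4 * n + 3) atTop atTop :=
    tendsto_atTop_mono (fun n => by simp only [id_eq]; omega) tendsto_id
  have h1 : Tendsto (fun _ : ℕ => (1/2 : ENNReal)) atTop (nhds L) := by
    refine (hL.comp htend).congr fun n => ?_
    exact (main n).1
  have h2 : Tendsto (fun _ : ℕ => (1/5 : ENNReal)) atTop (nhds L) := by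
    refine (hL.comp htend3).congr fun n => ?_
    exact (main n).2
  have e1 : L = (1/2 : ENNReal) := tendsto_nhds_unique h1 tendsto_const_nhds
  have e2 : L = (1/5 : ENNReal) := tendsto_nhds_unique h2 tendsto_const_nhds
  have := congrArg ENNReal.toReal (e1.symm.trans e2)
  norm_num [ENNReal.toReal_div] at this
end
end
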